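/- Fix an integer k ≥ 1 and c > 0 with c/720 − log(4(c+2k)) > 5. Let n > c be an integer, p = c/n, and let H be an (n,k,p) Newman–Watts small world. Then P(there exists a connected set S ⊆ [n] with log n ≤ |S| ≤ 9n/10 and e(S,Sᶜ) ≤ c|S|/12) ≤ 1/n³. -/

import Mathlib

open scoped Classical

noncomputable section

/-- The `(n,k)`-ring adjacency on `Fin n` (with mod-`n` arithmetic):
`x` and `y` are adjacent iff `(y-x) mod n ∈ {1,…,k}` (equivalently, in `{-k,…,-1}`). -/
def ringAdj (n k : ℕ) (x y : Fin n) : Prop :=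
  x ≠ y ∧ ((y - x).val ≤ k ∨ (x - y).val ≤ k)

/-- The Newman–Watts small world determined by the Bernoulli coordinates `η`:
the `(n,k)`-ring together with all pairs `{x,y}` with `η s(x,y) = true`. -/
def nwGraph (n k : ℕ) (η : Sym2 (Fin n) → Bool) : SimpleGraph (Fin n) where
  Adj x y := x ≠ y ∧ ((y - x).val ≤ k ∨ (x - y).val ≤ k ∨ η s(x, y) = true)
  symm := by
    constructor
    rintro x y ⟨hne, h⟩
    refine ⟨hne.symm, ?_⟩
    rcases h with h | h | h
    · exact Or.inr (Or.inl h)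
    · exact Or.inl h
    · exact Or.inr (Or.inr (by rwa [Sym2.eq_swap]))
  loopless := by constructor; rintro x ⟨hne, -⟩; exact hne rfl

/-- Product-Bernoulli(`p`) weight of an outcome `η`. -/
def nwWeight (n : ℕ) (p : ℝ) (η : Sym2 (Fin n) → Bool) : ℝ :=
  ∏ e : Sym2 (Fin n), if η e then p else 1 - p

/-- Probability of an event under the product Bernoulli(`p`) measure. -/
def nwPr (n : ℕ) (p : ℝ) (A : (Sym2 (Fin n) → Bool) → Prop) : ℝ :=
  ∑ η : Sym2 (Fin n) → Bool, if A η then nwWeight n p η else 0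

/-- Expectation under the product Bernoulli(`p`) measure. -/
def nwExp (n : ℕ) (p : ℝ) (X : (Sym2 (Fin n) → Bool) → ℝ) : ℝ :=
  ∑ η : Sym2 (Fin n) → Bool, nwWeight n p η * X η

variable {V : Type*} [Fintype V] [DecidableEq V]

/-- Degree of `v` in `G`. -/
def gdeg (G : SimpleGraph V) (v : V) : ℕ :=
  (Finset.univ.filter fun u => G.Adj v u).card

/-- Number of edges of `G`. -/
def edgeCount (G : SimpleGraph V) : ℕ := (∑ v, gdeg G v) / 2

/-- `e(S,Sᶜ)`: number of edges with one endpoint in `S`, the other outside. -/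
def eCross (G : SimpleGraph V) (S : Finset V) : ℕ :=
  ∑ x ∈ S, ∑ y ∈ Sᶜ, if G.Adj x y then 1 else 0

/-- `e(S) = Σ_{v∈S} deg v`. -/
def eTot (G : SimpleGraph V) (S : Finset V) : ℕ := ∑ x ∈ S, gdeg G x

/-- `e(S,S)`: number of edges with both endpoints in `S`. -/
def eIn (G : SimpleGraph V) (S : Finset V) : ℕ :=
  (∑ x ∈ S, ∑ y ∈ S, if G.Adj x y then 1 else 0) / 2

/-- `S` is connected if the induced subgraph `G[S]` is connected. -/
def connectedSet (G : SimpleGraph V) (S : Finset V) : Prop :=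
  (G.induce (S : Set V)).Connected

/-- One step of the lazy simple random walk applied to a distribution. -/
def lazyStep (G : SimpleGraph V) (μ : V → ℝ) : V → ℝ := fun v =>
  μ v / 2 + ∑ u ∈ Finset.univ.filter (fun u => G.Adj u v), μ u / (2 * gdeg G u)

/-- Distribution of the lazy simple random walk after `t` steps, started at `x`. -/
def walkDist (G : SimpleGraph V) (x : V) : ℕ → V → ℝ
  | 0 => fun v => if v = x then 1 else 0
  | (t + 1) => lazyStep G (walkDist G x t)

/-- Stationary distribution `π(v) = deg v / (2|E|)`. -/
def statDist (G : SimpleGraph V) (v : V) : ℝ := gdeg G v / (2 * edgeCount G)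

/-- Total variation distance. -/
def tvDist (μ ν : V → ℝ) : ℝ := (∑ v, |μ v - ν v|) / 2

/-- Mixing time `max_x min {t : ‖μ_{t,x} − π‖_TV ≤ 1/4}`. -/
def mixingTime (G : SimpleGraph V) : ℕ :=
  Finset.univ.sup fun x => sInf {t : ℕ | tvDist (walkDist G x t) (statDist G) ≤ 1 / 4}

/-!
A first-moment argument. A connected set `S` of size `j` is traced by a depth-first walk around a
spanning tree of `H[S]`: a root and `2(j-1)` moves, each a backtrack, one of the `2k` ring steps,
or a jump along a random edge, which must then be present. Weighting a backtrack by `1`, a ring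
step by `θ = 1/(2k+np)` and a jump by `θp`, the moves have total weight `2`, so the walks of size
`j` carry total weight `∑ p^#jumps ≤ n(4(2k+np))^(j-1)`. The jumps lie inside `S`, hence are
independent of the `j(n-j)` pairs across `S`, and a Chernoff bound with `e^(-λ) = 5/6` bounds the
probability that the jumps are present and `e(S,Sᶜ) ≤ cj/12` by
`p^#jumps (6/5)^(cj/12) (1-p/6)^(j(n-j))`. For `log n ≤ j ≤ 9n/10` the resulting term is at most
`n e^(j(log(4(c+2k)) - c/720)) ≤ n⁻⁴`, and there are at most `n` sizes `j`.
-/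

open Finset

section BernoulliProduct

variable {n : ℕ} {p : ℝ}

lemma nwWeight_nonneg (hp0 : 0 ≤ p) (hp1 : p ≤ 1) (η : Sym2 (Fin n) → Bool) :
    0 ≤ nwWeight n p η :=
  prod_nonneg fun e _ => by cases η e <;> simp <;> linarith

lemma nwPr_le_sum {ι : Type*} (hp0 : 0 ≤ p) (hp1 : p ≤ 1) (I : Finset ι)
    {A : (Sym2 (Fin n) → Bool) → Prop} {B : ι → (Sym2 (Fin n) → Bool) → Prop}
    (h : ∀ η, A η → ∃ i ∈ I, B i η) :
    nwPr n p A ≤ ∑ i ∈ I, nwPr n p (B i) := by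
  simp only [nwPr]
  rw [sum_comm]
  refine sum_le_sum fun η _ => ?_
  have hnn : ∀ i ∈ I, 0 ≤ if B i η then nwWeight n p η else 0 := fun i _ => by
    split_ifs
    exacts [nwWeight_nonneg hp0 hp1 η, le_rfl]
  split_ifs with hA
  · obtain ⟨i, hi, hBi⟩ := h η hA
    exact (if_pos hBi).symm.le.trans (single_le_sum hnn hi)
  · exact sum_nonneg hnn

lemma nwPr_mono (hp0 : 0 ≤ p) (hp1 : p ≤ 1) {A B : (Sym2 (Fin n) → Bool) → Prop}
    (h : ∀ η, A η → B η) : nwPr n p A ≤ nwPr n p B := by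
  simpa using nwPr_le_sum hp0 hp1 {()} (B := fun _ => B) fun η hA =>
    ⟨(), mem_singleton_self _, h η hA⟩

lemma nwPr_le_nwExp (hp0 : 0 ≤ p) (hp1 : p ≤ 1) {A : (Sym2 (Fin n) → Bool) → Prop}
    {X : (Sym2 (Fin n) → Bool) → ℝ} (hX : ∀ η, 0 ≤ X η) (hAX : ∀ η, A η → 1 ≤ X η) :
    nwPr n p A ≤ nwExp n p X := by
  refine sum_le_sum fun η _ => ?_
  have hw := nwWeight_nonneg hp0 hp1 η
  split_ifs with hA
  · exact le_mul_of_one_le_right hw (hAX η hA)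
  · exact mul_nonneg hw (hX η)

lemma nwExp_prod (f : Sym2 (Fin n) → Bool → ℝ) :
    nwExp n p (fun η => ∏ e, f e (η e)) = ∏ e, (p * f e true + (1 - p) * f e false) := by
  simp only [nwExp, nwWeight, ← prod_mul_distrib]
  convert (Fintype.prod_sum (κ := fun _ => Bool)
    fun e b => (if b then p else 1 - p) * f e b).symm using 2
  simp

lemma nwPr_forall_and_card_filter_le (hp0 : 0 ≤ p) (hp1 : p ≤ 1) {lam : ℝ} (hlam : 0 ≤ lam)
    {T F : Finset (Sym2 (Fin n))} (hTF : Disjoint T F) (τ : ℝ) :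
    nwPr n p (fun η => (∀ e ∈ T, η e = true) ∧ (#{e ∈ F | η e = true} : ℝ) ≤ τ) ≤
      p ^ #T * (Real.exp (lam * τ) * (1 - p * (1 - Real.exp (-lam))) ^ #F) := by
  set f : Sym2 (Fin n) → Bool → ℝ := fun e b =>
    (if e ∈ T then (if b then 1 else 0) else 1) *
      (if e ∈ F then (if b then Real.exp (-lam) else 1) else 1)
  have hprod : ∀ η : Sym2 (Fin n) → Bool, ∏ e, f e (η e) =
      (∏ e ∈ T, if η e then (1 : ℝ) else 0) * Real.exp (-lam) ^ #{e ∈ F | η e = true} := by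
    intro η
    rw [prod_mul_distrib, Fintype.prod_ite_mem, Fintype.prod_ite_mem,
      ← prod_const (s := {e ∈ F | η e = true}), prod_filter]
  have hmean : ∀ e, p * f e true + (1 - p) * f e false =
      (if e ∈ T then p else 1) * (if e ∈ F then 1 - p * (1 - Real.exp (-lam)) else 1) := by
    intro e
    by_cases hT : e ∈ T
    · simp [f, hT, disjoint_left.1 hTF hT]
    · by_cases hF : e ∈ F <;> simp [f, hT, hF]; ring
  calc _ ≤ nwExp n p (fun η => Real.exp (lam * τ) * ∏ e, f e (η e)) := by
        refine nwPr_le_nwExp hp0 hp1 (fun η => ?_) fun η ⟨hT, hτ⟩ => ?_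
        · rw [hprod]
          have : 0 ≤ ∏ e ∈ T, if η e then (1 : ℝ) else 0 := prod_nonneg fun _ _ => by
            split_ifs <;> norm_num
          positivity
        · rw [hprod, prod_eq_one fun e he => if_pos (hT e he), one_mul, ← Real.exp_nat_mul,
            ← Real.exp_add]
          exact Real.one_le_exp (by nlinarith)
    _ = _ := by
        have hconst : nwExp n p (fun η => Real.exp (lam * τ) * ∏ e, f e (η e)) =
            Real.exp (lam * τ) * nwExp n p (fun η => ∏ e, f e (η e)) := by
          simp only [nwExp, mul_left_comm _ (Real.exp _), mul_sum]
        rw [hconst, nwExp_prod f]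
        simp only [hmean, prod_mul_distrib, Fintype.prod_ite_mem, prod_const]
        ring

end BernoulliProduct

section CrossPairs

variable {α : Type*} [Fintype α] [DecidableEq α]

def crossPairs (S : Finset α) : Finset (Sym2 α) :=
  (S ×ˢ Sᶜ).image fun z => s(z.1, z.2)

lemma injOn_crossPairs (S : Finset α) :
    Set.InjOn (fun z : α × α => s(z.1, z.2)) (S ×ˢ Sᶜ : Finset (α × α)) := by
  rintro ⟨a, b⟩ hab ⟨a', b'⟩ hab' h
  simp only [coe_product, Set.mem_prod, mem_coe, mem_compl] at hab hab'
  rcases Sym2.eq_iff.1 h with ⟨rfl, rfl⟩ | ⟨rfl, rfl⟩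
  · rfl
  · exact absurd hab.1 hab'.2

lemma card_crossPairs (S : Finset α) : #(crossPairs S) = #S * #Sᶜ := by
  rw [crossPairs, card_image_of_injOn (injOn_crossPairs S), card_product]

lemma disjoint_sym2_crossPairs (S : Finset α) : Disjoint S.sym2 (crossPairs S) := by
  simp only [disjoint_left, crossPairs, mem_image, mem_product, mem_compl, mem_sym2_iff]
  rintro _ he ⟨⟨x, y⟩, ⟨-, hy⟩, rfl⟩
  exact hy (he y (Sym2.mem_mk_right x y))

end CrossPairs

lemma card_filter_crossPairs_le_eCross {n k : ℕ} (η : Sym2 (Fin n) → Bool) (S : Finset (Fin n)) :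
    #{e ∈ crossPairs S | η e = true} ≤ eCross (nwGraph n k η) S := by
  rw [card_filter, crossPairs, sum_image (injOn_crossPairs S), sum_product]
  refine sum_le_sum fun x hx => sum_le_sum fun y hy => ?_
  have hxy : x ≠ y := by rintro rfl; exact mem_compl.1 hy hx
  by_cases hη : η s(x, y) = true
  · simp [hη, nwGraph, hxy]
  · simp [hη]

lemma SimpleGraph.exists_adj_of_connected_induce {α : Type*} {G : SimpleGraph α} {S A : Finset α}
    (hS : (G.induce (S : Set α)).Connected) (hAS : A ⊆ S) (hA : A.Nonempty) (hAS' : A ≠ S) :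
    ∃ x ∈ A, ∃ u ∈ S, u ∉ A ∧ G.Adj x u := by
  obtain ⟨a, ha⟩ := hA
  obtain ⟨b, hbS, hbA⟩ : ∃ b ∈ S, b ∉ A := by
    by_contra! h
    exact hAS' (Subset.antisymm hAS h)
  obtain ⟨w⟩ := hS.preconnected ⟨a, hAS ha⟩ ⟨b, hbS⟩
  obtain ⟨d, -, hd₁, hd₂⟩ := w.exists_boundary_dart {z | z.1 ∈ A} ha hbA
  exact ⟨d.fst.1, hd₁, d.snd.1, d.snd.2, hd₂, d.adj⟩

/-- The moves out of a vertex `x` of `nwGraph n k η`: the ring steps `x + (j + 1)` and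
`x - (j + 1)` for `j < k`, and the jumps (`Sum.inr`) to an arbitrary vertex. -/
abbrev Token (n k : ℕ) := (Fin k ⊕ Fin k) ⊕ Fin n

namespace Token

variable {n k : ℕ} [NeZero n]

open Fin.NatCast in
def target (x : Fin n) : Token n k → Fin n
  | .inl (.inl j) => x + ((j + 1 : ℕ) : Fin n)
  | .inl (.inr j) => x - ((j + 1 : ℕ) : Fin n)
  | .inr v => v

open Fin.NatCast in
lemma exists_target_eq {η : Sym2 (Fin n) → Bool} {x y : Fin n} (h : (nwGraph n k η).Adj x y) :
    ∃ t : Token n k, target x t = y ∧ (t.isRight → η s(x, y) = true) := by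
  obtain ⟨hxy, hyx | hxy' | hη⟩ := h
  · have : (y - x).val ≠ 0 := by simpa [Fin.val_eq_zero_iff, sub_eq_zero] using hxy.symm
    refine ⟨.inl (.inl ⟨(y - x).val - 1, by omega⟩), ?_, by simp⟩
    simp only [target, Nat.sub_add_cancel (Nat.one_le_iff_ne_zero.2 this), Fin.cast_val_eq_self]
    abel
  · have : (x - y).val ≠ 0 := by simpa [Fin.val_eq_zero_iff, sub_eq_zero] using hxy
    refine ⟨.inl (.inr ⟨(x - y).val - 1, by omega⟩), ?_, by simp⟩
    simp only [target, Nat.sub_add_cancel (Nat.one_le_iff_ne_zero.2 this), Fin.cast_val_eq_self]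
    abel
  · exact ⟨.inr y, rfl, fun _ => hη⟩

end Token

open Token

/-!
A depth-first exploration is run by a list of moves acting on a stack of vertices whose head is
the current vertex: `some t` pushes `target (current) t`, `none` pops. An empty stack stands for
the root `d`. `pushes` records each push as (current vertex, token).
-/

namespace Exploration

variable {n k : ℕ} [NeZero n]

def stack (d : Fin n) : List (Fin n) → List (Option (Token n k)) → List (Fin n)
  | st, [] => st
  | st, none :: l => stack d st.tail l
  | st, some t :: l => stack d (target (st.headD d) t :: st) l

def pushes (d : Fin n) : List (Fin n) → List (Option (Token n k)) → List (Fin n × Token n k)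
  | _, [] => []
  | st, none :: l => pushes d st.tail l
  | st, some t :: l => (st.headD d, t) :: pushes d (target (st.headD d) t :: st) l

lemma stack_append (d : Fin n) (st : List (Fin n)) (a b : List (Option (Token n k))) :
    stack d st (a ++ b) = stack d (stack d st a) b := by
  induction a generalizing st with
  | nil => rfl
  | cons m a ih => cases m <;> simp [stack, ih]

lemma pushes_append (d : Fin n) (st : List (Fin n)) (a b : List (Option (Token n k))) :
    pushes d st (a ++ b) = pushes d st a ++ pushes d (stack d st a) b := by
  induction a generalizing st with
  | nil => rfl
  | cons m a ih => cases m <;> simp [pushes, stack, ih]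

lemma pushes_insert_detour (d : Fin n) (st : List (Fin n)) (a b : List (Option (Token n k)))
    (t : Token n k) :
    (pushes d st (a ++ some t :: none :: b)).Perm
      (((stack d st a).headD d, t) :: pushes d st (a ++ b)) := by
  rw [show a ++ some t :: none :: b = a ++ [some t, none] ++ b by simp, pushes_append,
    pushes_append, stack_append, pushes_append, List.append_assoc]
  exact List.perm_middle

lemma exists_append_of_mem (d : Fin n) (st : List (Fin n)) (l : List (Option (Token n k)))
    {u : Fin n} (hu : u ∈ st.headD d :: (pushes d st l).map (Function.uncurry target)) :
    ∃ a b, l = a ++ b ∧ (stack d st a).headD d = u := by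
  induction l generalizing st with
  | nil => exact ⟨[], [], rfl, (List.mem_singleton.1 hu).symm⟩
  | cons m l ih =>
    cases m with
    | none =>
      rcases List.mem_cons.1 hu with rfl | hu
      · exact ⟨[], _, rfl, rfl⟩
      · obtain ⟨a, b, rfl, hab⟩ := ih st.tail (List.mem_cons_of_mem _ hu)
        exact ⟨none :: a, b, rfl, hab⟩
    | some t =>
      rcases List.mem_cons.1 hu with rfl | hu
      · exact ⟨[], _, rfl, rfl⟩
      · obtain ⟨a, b, rfl, hab⟩ := ih (target (st.headD d) t :: st) (by simpa [pushes] using hu)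
        exact ⟨some t :: a, b, rfl, hab⟩

lemma fst_mem_of_mem_pushes (d : Fin n) (st : List (Fin n)) (l : List (Option (Token n k)))
    {x : Fin n × Token n k} (hx : x ∈ pushes d st l) :
    x.1 ∈ d :: st ++ (pushes d st l).map (Function.uncurry target) := by
  induction l generalizing st with
  | nil => simp [pushes] at hx
  | cons m l ih =>
    cases m with
    | none =>
      have := ih st.tail hx
      simp only [pushes, List.cons_append, List.mem_cons, List.mem_append] at this ⊢
      rcases this with h | h | h
      exacts [Or.inl h, Or.inr (Or.inl (List.mem_of_mem_tail h)), Or.inr (Or.inr h)]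
    | some t =>
      rcases List.mem_cons.1 hx with rfl | hx
      · cases st <;> simp
      · have := ih _ hx
        simp only [pushes, List.cons_append, List.mem_cons, List.mem_append, List.map_cons,
          Function.uncurry_apply_pair] at this ⊢
        tauto

def vertices (v : Fin n) (l : List (Option (Token n k))) : List (Fin n) :=
  v :: (pushes v [v] l).map (Function.uncurry target)

def jumpEdges (v : Fin n) (l : List (Option (Token n k))) : List (Sym2 (Fin n)) :=
  ((pushes v [v] l).filter (·.2.isRight)).map fun x => s(x.1, target x.1 x.2)

lemma mem_sym2_of_mem_jumpEdges {v : Fin n} {l : List (Option (Token n k))} {e : Sym2 (Fin n)}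
    (he : e ∈ jumpEdges v l) : e ∈ (vertices v l).toFinset.sym2 := by
  obtain ⟨x, hx, rfl⟩ := List.mem_map.1 he
  have hx := (List.mem_filter.1 hx).1
  have h₁ := fst_mem_of_mem_pushes v [v] l hx
  rw [mem_sym2_iff]
  rintro z hz
  rcases Sym2.mem_iff.1 hz with rfl | rfl
  · simpa [vertices] using h₁
  · exact List.mem_toFinset.2 (List.mem_cons_of_mem _ (List.mem_map.2 ⟨x, hx, rfl⟩))

/-- `l` is a depth-first exploration from `v` of a spanning tree of `A` in `nwGraph n k η`,
using each vertex and each jump once. -/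
structure Explores (η : Sym2 (Fin n) → Bool) (v : Fin n) (A : Finset (Fin n))
    (l : List (Option (Token n k))) : Prop where
  length_eq : l.length = 2 * (#A - 1)
  nodup : (vertices v l).Nodup
  toFinset_eq : (vertices v l).toFinset = A
  nodup_jumpEdges : (jumpEdges v l).Nodup
  jumpEdges_present : ∀ e ∈ jumpEdges v l, η e = true

lemma explores_singleton (η : Sym2 (Fin n) → Bool) (v : Fin n) :
    Explores (k := k) η v {v} [] where
  length_eq := rfl
  nodup := List.nodup_singleton v
  toFinset_eq := rfl
  nodup_jumpEdges := List.nodup_nil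
  jumpEdges_present _ he := absurd he List.not_mem_nil

/-- A detour `[some t, none]` through a new neighbour `u` of an explored vertex `x`, inserted where
the exploration stands at `x`, explores `insert u A`. -/
lemma Explores.insert {η : Sym2 (Fin n) → Bool} {v x u : Fin n} {A : Finset (Fin n)}
    {l : List (Option (Token n k))} (hl : Explores η v A l) (hx : x ∈ A) (hu : u ∉ A)
    (hxu : (nwGraph n k η).Adj x u) :
    ∃ l' : List (Option (Token n k)), Explores η v (insert u A) l' := by
  rw [← hl.toFinset_eq, List.mem_toFinset] at hx
  obtain ⟨a, b, rfl, hab⟩ := exists_append_of_mem v [v] l hx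
  obtain ⟨t, rfl, ht⟩ := exists_target_eq (k := k) hxu
  have hpush := pushes_insert_detour v [v] a b t
  rw [hab] at hpush
  have hvert : (vertices v (a ++ some t :: none :: b)).Perm
      (target x t :: vertices v (a ++ b)) :=
    ((hpush.map _).cons v).trans (List.Perm.swap _ _ _)
  have hjump : (jumpEdges v (a ++ some t :: none :: b)).Perm
      ((if t.isRight then [s(x, target x t)] else []) ++ jumpEdges v (a ++ b)) := by
    refine (hpush.filter _).map _ |>.trans ?_
    cases h : t.isRight <;> simp [h, jumpEdges]
  have hnew : target x t ∉ vertices v (a ++ b) := by rwa [← List.mem_toFinset, hl.toFinset_eq]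
  refine ⟨a ++ some t :: none :: b, ?_, ?_, ?_, ?_, ?_⟩
  · have := hl.length_eq
    have hA : 1 ≤ #A := card_pos.2 ⟨v, by simp [← hl.toFinset_eq, vertices]⟩
    simp only [List.length_append, List.length_cons] at this ⊢
    rw [card_insert_of_notMem hu]
    omega
  · exact hvert.nodup_iff.2 (List.nodup_cons.2 ⟨hnew, hl.nodup⟩)
  · rw [List.toFinset_eq_of_perm _ _ hvert, List.toFinset_cons, hl.toFinset_eq]
  · refine hjump.nodup_iff.2 ?_
    cases h : t.isRight
    · simpa using hl.nodup_jumpEdges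
    · refine List.nodup_cons.2 ⟨fun hmem => hnew ?_, hl.nodup_jumpEdges⟩
      have := mem_sym2_iff.1 (mem_sym2_of_mem_jumpEdges hmem) _ (Sym2.mem_mk_right _ _)
      exact List.mem_toFinset.1 this
  · intro e he
    rcases List.mem_append.1 (hjump.subset he) with he | he
    · cases h : t.isRight <;> simp_all
    · exact hl.jumpEdges_present e he

lemma exists_explores {η : Sym2 (Fin n) → Bool} {S : Finset (Fin n)}
    (hS : connectedSet (nwGraph n k η) S) :
    ∃ v l, Explores (k := k) η v S l := by
  obtain ⟨⟨v, hv⟩⟩ := hS.nonempty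
  have hgrow : ∀ m < #S, ∃ A ⊆ S, #A = m + 1 ∧ ∃ l, Explores (k := k) η v A l := by
    intro m
    induction m with
    | zero => exact fun _ => ⟨{v}, singleton_subset_iff.2 hv, rfl, [], explores_singleton η v⟩
    | succ m ih =>
      intro hm
      obtain ⟨A, hAS, hA, l, hl⟩ := ih (by omega)
      have hvA : v ∈ A := by simp [← hl.toFinset_eq, vertices]
      obtain ⟨x, hx, u, huS, hu, hxu⟩ := SimpleGraph.exists_adj_of_connected_induce hS hAS
        ⟨v, hvA⟩ (by rintro rfl; omega)
      obtain ⟨l', hl'⟩ := hl.insert hx hu hxu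
      exact ⟨insert u A, insert_subset huS hAS, by rw [card_insert_of_notMem hu, hA], l', hl'⟩
  have hS1 : 1 ≤ #S := card_pos.2 ⟨v, hv⟩
  obtain ⟨A, hAS, hA, l, hl⟩ := hgrow (#S - 1) (by omega)
  exact ⟨v, l, eq_of_subset_of_card_le hAS (by omega) ▸ hl⟩

/-- Codes of explorations of `j`-vertex sets: a root and a move list of the length
`2 * (j - 1)` of a depth-first walk around a spanning tree. -/
def codes (n k : ℕ) [NeZero n] (j : ℕ) :
    Finset (Fin n × (Fin (2 * (j - 1)) → Option (Token n k))) :=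
  univ.filter fun c => (vertices c.1 (List.ofFn c.2)).Nodup ∧
    (vertices c.1 (List.ofFn c.2)).length = j ∧ (jumpEdges c.1 (List.ofFn c.2)).Nodup

lemma exists_mem_codes {η : Sym2 (Fin n) → Bool} {S : Finset (Fin n)}
    (hS : connectedSet (nwGraph n k η) S) :
    ∃ c ∈ codes n k #S, (vertices c.1 (List.ofFn c.2)).toFinset = S ∧
      ∀ e ∈ jumpEdges c.1 (List.ofFn c.2), η e = true := by
  obtain ⟨v, l, hl⟩ := exists_explores hS
  have hofFn : List.ofFn (fun i : Fin (2 * (#S - 1)) => l.getD i none) = l :=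
    List.ext_getElem (by simp [hl.length_eq]) fun i _ h => by simp [List.getElem?_eq_getElem h]
  have hlen : (vertices v l).length = #S := by
    rw [← List.toFinset_card_of_nodup hl.nodup, hl.toFinset_eq]
  refine ⟨(v, fun i => l.getD i none), mem_filter.2 ⟨mem_univ _, ?_⟩, ?_⟩ <;> dsimp only <;>
    rw [hofFn]
  · exact ⟨hl.nodup, hlen, hl.nodup_jumpEdges⟩
  · exact ⟨hl.toFinset_eq, hl.jumpEdges_present⟩

def moveWeight (p θ : ℝ) : Option (Token n k) → ℝ
  | none => 1
  | some t => θ * if t.isRight then p else 1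

omit [NeZero n] in
lemma sum_moveWeight (p θ : ℝ) :
    ∑ m : Option (Token n k), moveWeight p θ m = 1 + θ * (2 * k + n * p) := by
  simp [Fintype.sum_option, moveWeight]
  ring

lemma prod_map_moveWeight (p θ : ℝ) (d : Fin n) (st : List (Fin n))
    (l : List (Option (Token n k))) :
    (l.map (moveWeight p θ)).prod =
      θ ^ (pushes d st l).length * p ^ (pushes d st l).countP (·.2.isRight) := by
  induction l generalizing st with
  | nil => simp [pushes]
  | cons m l ih =>
    cases m with
    | none => simpa [moveWeight, pushes] using ih st.tail
    | some t =>
      rw [List.map_cons, List.prod_cons, ih (target (st.headD d) t :: st)]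
      cases t <;> simp [pushes, moveWeight, List.countP_cons, pow_succ] <;> ring

lemma sum_codes_le {p : ℝ} (hp : 0 < p) (j : ℕ) :
    ∑ c ∈ codes n k j, p ^ (jumpEdges c.1 (List.ofFn c.2)).length ≤
      n * (4 * (2 * k + n * p)) ^ (j - 1) := by
  set a : ℝ := 2 * k + n * p
  have ha : 0 < a := by
    have : (0 : ℝ) < n := by exact_mod_cast Nat.pos_of_neZero n
    positivity
  have hweight : ∀ c ∈ codes n k j, p ^ (jumpEdges c.1 (List.ofFn c.2)).length =
      a ^ (j - 1) * ∏ i, moveWeight p a⁻¹ (c.2 i) := by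
    intro c hc
    obtain ⟨-, hlen, -⟩ := (mem_filter.1 hc).2
    rw [← List.prod_ofFn, show (List.ofFn fun i => moveWeight p a⁻¹ (c.2 i)) =
      (List.ofFn c.2).map (moveWeight p a⁻¹) by rw [List.map_ofFn]; rfl,
      prod_map_moveWeight p a⁻¹ c.1 [c.1]]
    simp only [vertices, List.length_cons, List.length_map] at hlen
    rw [show (pushes c.1 [c.1] (List.ofFn c.2)).length = j - 1 by omega, ← mul_assoc, ← mul_pow,
      mul_inv_cancel₀ ha.ne', one_pow, one_mul, jumpEdges, List.length_map,
      List.countP_eq_length_filter]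
  have hall : ∑ c : Fin n × (Fin (2 * (j - 1)) → Option (Token n k)),
      ∏ i, moveWeight p a⁻¹ (c.2 i) = n * 4 ^ (j - 1) := by
    have h := Fintype.prod_sum fun (_ : Fin (2 * (j - 1))) m =>
      moveWeight (n := n) (k := k) p a⁻¹ m
    have hθ : a⁻¹ * (2 * k + n * p) = 1 := inv_mul_cancel₀ ha.ne'
    rw [Fintype.sum_prod_type]
    simp only [← h, sum_moveWeight, hθ, prod_const, card_univ, Fintype.card_fin, sum_const,
      pow_mul]
    norm_num
  have hle : ∑ c ∈ codes n k j, ∏ i, moveWeight p a⁻¹ (c.2 i) ≤ n * 4 ^ (j - 1) :=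
    hall ▸ sum_le_sum_of_subset_of_nonneg (subset_univ _) fun c _ _ => prod_nonneg fun i _ => by
      rcases c.2 i with _ | (t | t) <;> simp [moveWeight] <;> positivity
  calc _ = a ^ (j - 1) * ∑ c ∈ codes n k j, ∏ i, moveWeight p a⁻¹ (c.2 i) := by
        rw [sum_congr rfl hweight, mul_sum]
    _ ≤ a ^ (j - 1) * (n * 4 ^ (j - 1)) := by gcongr
    _ = _ := by rw [mul_pow]; ring

lemma nwPr_jumpEdges_and_eCross_le {p : ℝ} (hp0 : 0 ≤ p) (hp1 : p ≤ 1) {lam : ℝ}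
    (hlam : 0 ≤ lam) {j : ℕ} {c : Fin n × (Fin (2 * (j - 1)) → Option (Token n k))}
    (hc : c ∈ codes n k j) (τ : ℝ) :
    nwPr n p (fun η => (∀ e ∈ jumpEdges c.1 (List.ofFn c.2), η e = true) ∧
        (eCross (nwGraph n k η) (vertices c.1 (List.ofFn c.2)).toFinset : ℝ) ≤ τ) ≤
      p ^ (jumpEdges c.1 (List.ofFn c.2)).length *
        (Real.exp (lam * τ) * (1 - p * (1 - Real.exp (-lam))) ^ (j * (n - j))) := by
  obtain ⟨hnodup, hlen, hjnodup⟩ := (mem_filter.1 hc).2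
  set S := (vertices c.1 (List.ofFn c.2)).toFinset
  set T := (jumpEdges c.1 (List.ofFn c.2)).toFinset
  have hTS : Disjoint T (crossPairs S) :=
    (disjoint_sym2_crossPairs S).mono_left fun e he => mem_sym2_of_mem_jumpEdges
      (List.mem_toFinset.1 he)
  calc _ ≤ nwPr n p (fun η => (∀ e ∈ T, η e = true) ∧
        (#{e ∈ crossPairs S | η e = true} : ℝ) ≤ τ) := by
        refine nwPr_mono hp0 hp1 fun η ⟨hT, hτ⟩ => ⟨fun e he => hT e (List.mem_toFinset.1 he), ?_⟩
        exact le_trans (by exact_mod_cast card_filter_crossPairs_le_eCross η S) hτ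
    _ ≤ _ := nwPr_forall_and_card_filter_le hp0 hp1 hlam hTS τ
    _ = _ := by
        rw [card_crossPairs, card_compl, Fintype.card_fin, List.toFinset_card_of_nodup hjnodup,
          List.toFinset_card_of_nodup hnodup, hlen]

end Exploration

open Exploration in
theorem nwPr_exists_connected_eCross_le {n k : ℕ} [NeZero n] {p : ℝ} (hp0 : 0 < p) (hp1 : p ≤ 1)
    {lam : ℝ} (hlam : 0 ≤ lam) (J : Finset ℕ) (τ : ℕ → ℝ) :
    nwPr n p (fun η => ∃ S : Finset (Fin n), connectedSet (nwGraph n k η) S ∧ #S ∈ J ∧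
        (eCross (nwGraph n k η) S : ℝ) ≤ τ #S) ≤
      ∑ j ∈ J, n * (4 * (2 * k + n * p)) ^ (j - 1) *
        (Real.exp (lam * τ j) * (1 - p * (1 - Real.exp (-lam))) ^ (j * (n - j))) := by
  have hq : 0 ≤ 1 - p * (1 - Real.exp (-lam)) := by nlinarith [Real.exp_pos (-lam)]
  calc _ ≤ ∑ x ∈ J.sigma (codes n k), nwPr n p (fun η =>
        (∀ e ∈ jumpEdges x.2.1 (List.ofFn x.2.2), η e = true) ∧
        (eCross (nwGraph n k η) (vertices x.2.1 (List.ofFn x.2.2)).toFinset : ℝ) ≤ τ x.1) := by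
        refine nwPr_le_sum hp0.le hp1 _ fun η ⟨S, hS, hSJ, hτ⟩ => ?_
        obtain ⟨c, hc, hcS, hcη⟩ := exists_mem_codes hS
        refine ⟨⟨#S, c⟩, mem_sigma.2 ⟨hSJ, hc⟩, hcη, ?_⟩
        rwa [hcS]
    _ ≤ ∑ x ∈ J.sigma (codes n k), p ^ (jumpEdges x.2.1 (List.ofFn x.2.2)).length *
        (Real.exp (lam * τ x.1) * (1 - p * (1 - Real.exp (-lam))) ^ (x.1 * (n - x.1))) :=
        sum_le_sum fun x hx =>
          nwPr_jumpEdges_and_eCross_le hp0.le hp1 hlam (mem_sigma.1 hx).2 _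
    _ ≤ _ := by
        rw [sum_sigma]
        refine sum_le_sum fun j _ => ?_
        dsimp only
        rw [← sum_mul]
        exact mul_le_mul_of_nonneg_right (sum_codes_le hp0 j)
          (mul_nonneg (Real.exp_pos _).le (pow_nonneg hq _))

lemma Real.log_six_div_five_le : Real.log (6 / 5) ≤ 11 / 60 := by
  rw [Real.log_le_iff_le_exp (by norm_num)]
  refine le_trans ?_ (Real.quadratic_le_exp_of_nonneg (by norm_num))
  norm_num

lemma one_sub_div_pow_mul_sub_le_exp {c : ℝ} {n j : ℕ} (hc : 0 < c) (hcn : c < n)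
    (hjn : (j : ℝ) ≤ 9 * n / 10) :
    (1 - c / n * (1 - 5 / 6)) ^ (j * (n - j)) ≤ Real.exp (-(c * j / 60)) := by
  have hn : (0 : ℝ) < n := hc.trans hcn
  have hjn' : j ≤ n := by exact_mod_cast (show (j : ℝ) ≤ n by linarith)
  have hq : 0 ≤ 1 - c / n * (1 - 5 / 6) := by
    have : c / n < 1 := (div_lt_one hn).2 hcn
    linarith
  calc _ ≤ Real.exp (-(c / n / 6)) ^ (j * (n - j)) :=
        pow_le_pow_left₀ hq (by linarith [Real.add_one_le_exp (-(c / n / 6))]) _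
    _ = Real.exp (-(c / n / 6) * (j * (n - j))) := by
        rw [← Real.exp_nat_mul, mul_comm, Nat.cast_mul, Nat.cast_sub hjn']
    _ ≤ _ := by
        gcongr
        have h : (n : ℝ) / 10 ≤ n - j := by linarith
        have := mul_le_mul_of_nonneg_left h (by positivity : 0 ≤ c / n / 6 * j)
        field_simp at this ⊢
        nlinarith

lemma first_moment_term_le {k n j : ℕ} {c : ℝ} (hk : 1 ≤ k) (hc : 0 < c) (hcn : c < n)
    (hbig : c / 720 - Real.log (4 * (c + 2 * k)) > 5) (hj : Real.log n ≤ j)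
    (hjn : (j : ℝ) ≤ 9 * n / 10) :
    n * (4 * (2 * k + n * (c / n))) ^ (j - 1) *
        (Real.exp (Real.log (6 / 5) * (c * j / 12)) *
          (1 - c / n * (1 - Real.exp (-Real.log (6 / 5)))) ^ (j * (n - j))) ≤ 1 / n ^ 4 := by
  have hn : (0 : ℝ) < n := hc.trans hcn
  have h56 : Real.exp (-Real.log (6 / 5)) = 5 / 6 := by
    rw [Real.exp_neg, Real.exp_log (by norm_num)]
    norm_num
  rw [h56]
  have hA : 1 ≤ 4 * (c + 2 * k) := by
    have : (1 : ℝ) ≤ k := by exact_mod_cast hk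
    linarith
  have hring : (4 * (2 * k + n * (c / n))) ^ (j - 1) ≤
      Real.exp (j * Real.log (4 * (c + 2 * k))) := by
    rw [Real.exp_nat_mul, Real.exp_log (by linarith), mul_div_cancel₀ _ hn.ne',
      add_comm (2 * _ : ℝ)]
    exact pow_le_pow_right₀ hA (Nat.sub_le j 1)
  have hgain : Real.exp (Real.log (6 / 5) * (c * j / 12)) ≤ Real.exp (11 / 60 * (c * j / 12)) :=
    Real.exp_le_exp.2 (by gcongr; exact Real.log_six_div_five_le)
  calc _ ≤ n * Real.exp (j * Real.log (4 * (c + 2 * k))) *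
        (Real.exp (11 / 60 * (c * j / 12)) * Real.exp (-(c * j / 60))) := by
        have hq : 0 ≤ 1 - c / n * (1 - 5 / 6) := by
          have : c / n < 1 := (div_lt_one hn).2 hcn
          linarith
        gcongr
        exact one_sub_div_pow_mul_sub_le_exp hc hcn hjn
    _ = n * Real.exp (j * (Real.log (4 * (c + 2 * k)) - c / 720)) := by
        rw [mul_assoc, ← Real.exp_add, ← Real.exp_add]
        ring_nf
    _ ≤ n * Real.exp (-5 * Real.log n) := by
        refine mul_le_mul_of_nonneg_left (Real.exp_le_exp.2 ?_) hn.le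
        have : (1 : ℝ) ≤ n := Nat.one_le_cast.2 (by exact_mod_cast hn)
        nlinarith [Real.log_nonneg this]
    _ = 1 / n ^ 4 := by
        rw [neg_mul, Real.exp_neg, show (5 : ℝ) = (5 : ℕ) by norm_num, Real.exp_nat_mul,
          Real.exp_log hn]
        field_simp

/-- **Lemma (edge expansion of connected sets, large `c`).** Fix `k ≥ 1` and `c > 0` with
`c/720 − log(4(c+2k)) > 5`, let `n > c`, `p = c/n`, and let `H` be an `(n,k,p)` Newman–Watts
small world. Then the probability that some connected set `S` with `log n ≤ |S| ≤ 9n/10` has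
`e(S,Sᶜ) ≤ c|S|/12` is at most `1/n³`. -/
theorem expansion_of_connected_sets (k : ℕ) (hk : 1 ≤ k) (c : ℝ) (hc : 0 < c)
    (hbig : c / 720 - Real.log (4 * (c + 2 * k)) > 5) (n : ℕ) (hn : c < n) :
    nwPr n (c / n) (fun η => ∃ S : Finset (Fin n),
      connectedSet (nwGraph n k η) S ∧
      Real.log n ≤ (S.card : ℝ) ∧ (S.card : ℝ) ≤ 9 * n / 10 ∧
      (eCross (nwGraph n k η) S : ℝ) ≤ c * S.card / 12) ≤
    1 / (n : ℝ) ^ 3 := by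
  have hn0 : (0 : ℝ) < n := hc.trans hn
  have : NeZero n := ⟨by exact_mod_cast hn0.ne'⟩
  have hp0 : 0 < c / n := div_pos hc hn0
  have hp1 : c / n ≤ 1 := (div_le_one hn0).2 hn.le
  set J : Finset ℕ := {j ∈ Icc 1 n | Real.log n ≤ j ∧ (j : ℝ) ≤ 9 * n / 10}
  calc _ ≤ nwPr n (c / n) (fun η => ∃ S : Finset (Fin n), connectedSet (nwGraph n k η) S ∧
        #S ∈ J ∧ (eCross (nwGraph n k η) S : ℝ) ≤ c * #S / 12) := by
        refine nwPr_mono hp0.le hp1 fun η ⟨S, hS, hlog, h910, hcross⟩ => ⟨S, hS, ?_, hcross⟩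
        obtain ⟨⟨v, hv⟩⟩ := hS.nonempty
        refine mem_filter.2 ⟨mem_Icc.2 ⟨card_pos.2 ⟨v, hv⟩, ?_⟩, hlog, h910⟩
        simpa using card_le_univ S
    _ ≤ ∑ j ∈ J, 1 / (n : ℝ) ^ 4 :=
        (nwPr_exists_connected_eCross_le hp0 hp1 (Real.log_nonneg (by norm_num)) J
          fun j => c * j / 12).trans <| sum_le_sum fun j hj =>
            first_moment_term_le hk hc hn hbig (mem_filter.1 hj).2.1 (mem_filter.1 hj).2.2
    _ ≤ n * (1 / n ^ 4) := by
        rw [sum_const, nsmul_eq_mul]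
        gcongr
        exact_mod_cast (card_filter_le _ _).trans (Nat.card_Icc 1 n).le
    _ = 1 / n ^ 3 := by field_simp
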